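/- arXiv:2203.13692 — 2 statements merged into one kernel-verified Lean document; each statement's English description precedes it below -/
import Mathlib

section
/- Let R ⊆ S × S' be an A-simulation between iCGS G and G', and suppose q R q'. Then for every state r' ∈ C_A'(q') (the common knowledge neighborhood of q' for coalition A in G'), there exists a state r ∈ C_A(q) such that r R r'. -/
/-- An imperfect-information concurrent game structure (iCGS), given as raw data;
the defining axioms are collected in `iCGS.Valid`. -/
structure iCGS (Ag AP S Act : Type) where
  init : S
  indist : Ag → S → S → Prop
  protocol : Ag → S → Set Act
  trans : S → (Ag → Act) → S → Prop
  label : S → Set AP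

namespace iCGS

variable {Ag AP S S' Act Act' : Type}

/-- The axioms of an iCGS. -/
def Valid (G : iCGS Ag AP S Act) : Prop :=
  (∀ i, Equivalence (G.indist i)) ∧
  (∀ i s, (G.protocol i s).Nonempty) ∧
  (∀ i s s', G.indist i s s' → G.protocol i s = G.protocol i s') ∧
  (∀ s a, (∃ s', G.trans s a s') ↔ ∀ i, a i ∈ G.protocol i s)

/-- Common-knowledge reachability for coalition `A`:
reflexive-transitive closure of the union of the `∼ᵢ`, `i ∈ A`. -/
def ck (G : iCGS Ag AP S Act) (A : Set Ag) : S → S → Prop :=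
  Relation.ReflTransGen (fun s s' => ∃ i ∈ A, G.indist i s s')

/-- Common-knowledge neighbourhood `C_A(q)`. -/
def CKN (G : iCGS Ag AP S Act) (A : Set Ag) (q : S) : Set S := {r | G.ck A q r}

/-- "Everybody knows" neighbourhood `E_A(q)`. -/
def EKN (G : iCGS Ag AP S Act) (A : Set Ag) (q : S) : Set S :=
  {r | ∃ i ∈ A, G.indist i q r}

/-- `σ` is a partial uniform strategy for coalition `A` with domain `Q`. -/
def IsPStrat (G : iCGS Ag AP S Act) (A : Set Ag) (Q : Set S) (σ : Ag → S → Act) : Prop :=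
  (∀ i ∈ A, ∀ s ∈ Q, σ i s ∈ G.protocol i s) ∧
  (∀ i ∈ A, ∀ s ∈ Q, ∀ t ∈ Q, G.indist i s t → σ i s = σ i t)

/-- `σ` is a (total) uniform memoryless strategy for coalition `A`. -/
def IsStrat (G : iCGS Ag AP S Act) (A : Set Ag) (σ : Ag → S → Act) : Prop :=
  G.IsPStrat A Set.univ σ

/-- Successors of `s` under joint actions compatible with `σ` on coalition `A`. -/
def succ (G : iCGS Ag AP S Act) (A : Set Ag) (σ : Ag → S → Act) (s : S) : Set S :=
  {t | ∃ a : Ag → Act, (∀ i ∈ A, a i = σ i s) ∧ G.trans s a t}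

/-- Objective outcome set of strategy `σ` at `q` (runs as infinite state sequences). -/
def OutObj (G : iCGS Ag AP S Act) (A : Set Ag) (σ : Ag → S → Act) (q : S) :
    Set (ℕ → S) :=
  {lam | lam 0 = q ∧ ∀ j, lam (j + 1) ∈ G.succ A σ (lam j)}

/-- Subjective outcome set: union of objective outcomes over states indistinguishable
from `q` for some member of the coalition. -/
def OutSubj (G : iCGS Ag AP S Act) (A : Set Ag) (σ : Ag → S → Act) (q : S) :
    Set (ℕ → S) :=
  {lam | ∃ i ∈ A, ∃ r, G.indist i q r ∧ lam ∈ G.OutObj A σ r}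

/-- Outcome set: subjective (`x = true`) or objective (`x = false`).
(For a nonempty coalition the subjective case coincides with the union of
objective outcomes over indistinguishable states, by reflexivity; for the
empty coalition it degenerates to the objective case.) -/
def Out (G : iCGS Ag AP S Act) (x : Bool) (A : Set Ag) (σ : Ag → S → Act) (q : S) :
    Set (ℕ → S) :=
  if x then G.OutObj A σ q ∪ G.OutSubj A σ q else G.OutObj A σ q

/-- `R` is a simulation for coalition `A` from `G` to `G'` (Def. of simulation):
existence of a strategy simulator over common-knowledge neighbourhoods with
(a) atom agreement, (b) epistemic back-condition, (c) strategy transfer, and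
(2) injectivity modulo common-knowledge neighbourhoods. -/
def IsSimulation (G : iCGS Ag AP S Act) (G' : iCGS Ag AP S' Act') (A : Set Ag)
    (R : S → S' → Prop) : Prop :=
  (∃ ST : Set S → Set S' → (Ag → S → Act) → (Ag → S' → Act'),
    ∀ q q', R q q' →
      (∀ σ, G.IsPStrat A (G.CKN A q) σ →
        G'.IsPStrat A (G'.CKN A q') (ST (G.CKN A q) (G'.CKN A q') σ)) ∧
      (∀ r ∈ G.CKN A q, ∀ r' ∈ G'.CKN A q', R r r' →
        ∀ σ, G.IsPStrat A (G.CKN A q) σ →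
          ∀ s' ∈ G'.succ A (ST (G.CKN A q) (G'.CKN A q') σ) r',
            ∃ s ∈ G.succ A σ r, R s s')) ∧
  (∀ q q', R q q' → G.label q = G'.label q') ∧
  (∀ q q', R q q' → ∀ i ∈ A, ∀ r', G'.indist i q' r' →
    ∃ r, G.indist i q r ∧ R r r') ∧
  (∀ q₁ q₂ q', R q₁ q' → R q₂ q' → G.CKN A q₁ = G.CKN A q₂)

/-- `R` is a bisimulation for `A` iff both `R` and its converse are `A`-simulations. -/
def IsBisimulation (G : iCGS Ag AP S Act) (G' : iCGS Ag AP S' Act') (A : Set Ag)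
    (R : S → S' → Prop) : Prop :=
  G.IsSimulation G' A R ∧ G'.IsSimulation G A (fun q' q => R q q')

end iCGS

theorem Relation.ReflTransGen.exists_reflTransGen_of_back {α β : Type*}
    {r : α → α → Prop} {r' : β → β → Prop} {R : α → β → Prop}
    (back : ∀ a b b', R a b → r' b b' → ∃ a', r a a' ∧ R a' b')
    {a : α} {b b' : β} (hab : R a b) (h : Relation.ReflTransGen r' b b') :
    ∃ a', Relation.ReflTransGen r a a' ∧ R a' b' := by
  induction h with
  | refl => exact ⟨a, .refl, hab⟩
  | tail _ hstep ih =>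
    obtain ⟨c, hac, hR⟩ := ih
    obtain ⟨d, hcd, hR'⟩ := back _ _ _ hR hstep
    exact ⟨d, hac.tail hcd, hR'⟩

theorem ckn_covered_by_simulation_general {Ag AP S S' Act Act' : Type}
    (G : iCGS Ag AP S Act) (G' : iCGS Ag AP S' Act')
    (A : Set Ag) (R : S → S' → Prop)
    (hsim : G.IsSimulation G' A R) (q : S) (q' : S') (hq : R q q') :
    ∀ r' ∈ G'.CKN A q', ∃ r ∈ G.CKN A q, R r r' := by
  obtain ⟨-, -, hback, -⟩ := hsim
  intro r' hr'
  refine Relation.ReflTransGen.exists_reflTransGen_of_back ?_ hq hr'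
  rintro s t t' hst ⟨i, hi, htt'⟩
  obtain ⟨s', hss', hR⟩ := hback s t hst i hi t' htt'
  exact ⟨s', ⟨i, hi, hss'⟩, hR⟩

/-- if `R` is an `A`-simulation and `q R q'`, then every state of the
common-knowledge neighbourhood of `q'` is related to some state of the
common-knowledge neighbourhood of `q`. -/
theorem ckn_covered_by_simulation {Ag AP S S' Act Act' : Type}
    (G : iCGS Ag AP S Act) (G' : iCGS Ag AP S' Act')
    (hG : G.Valid) (hG' : G'.Valid) (A : Set Ag) (R : S → S' → Prop)
    (hsim : G.IsSimulation G' A R) (q : S) (q' : S') (hq : R q q') :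
    ∀ r' ∈ G'.CKN A q', ∃ r ∈ G.CKN A q, R r r' :=
  ckn_covered_by_simulation_general G G' A R hsim q q' hq
end

section
/- Let R be an A-simulation between iCGS G and G' with q R q'. For every uniform strategy σ_A for coalition A in G, there exists a uniform strategy σ'_A in G' such that for every run λ' in the objective outcome set out^{G'}_obj(q', σ'_A), there exists a run λ in out^G_obj(q, σ_A) with λ[i] R λ'[i] for all i ≥ 0. -/
/-!
Fix a default uniform strategy `δ` of `G'`. On each common-knowledge class of `G'` of the form
`C_A(p')` with `p R p'`, play the simulator's image of `σ` for the pair of classes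
`(C_A(p), C_A(p'))`; elsewhere play `δ`. Since common-knowledge classes partition the states,
these partial uniform strategies glue to a total one. A step of this strategy from `r'` with
`r R r'`, where `C_A(r') = C_A(p')`, is matched in `G` from `r`: the back-condition, iterated
along common knowledge, yields `u ∈ C_A(p)` with `u R r'`, and injectivity gives `C_A(u) = C_A(r)`, so `r ∈ C_A(p)` and strategy
transfer applies. Runs are then matched step by step.
-/

namespace iCGS

variable {Ag AP S S' Act Act' : Type}

section CommonKnowledge

variable (G : iCGS Ag AP S Act) (A : Set Ag)

lemma ck_symm (hsymm : ∀ i, Std.Symm (G.indist i)) {s t : S} (h : G.ck A s t) :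
    G.ck A t s :=
  have : Std.Symm fun s s' => ∃ i ∈ A, G.indist i s s' :=
    ⟨fun _ _ ⟨i, hi, hst⟩ => ⟨i, hi, (hsymm i).symm _ _ hst⟩⟩
  Relation.ReflTransGen.stdSymm.symm _ _ h

lemma CKN_eq_of_ck (hsymm : ∀ i, Std.Symm (G.indist i)) {s t : S} (h : G.ck A s t) :
    G.CKN A s = G.CKN A t :=
  Set.ext fun _ => ⟨(G.ck_symm A hsymm h).trans, h.trans⟩

lemma IsStrat.isPStrat {G : iCGS Ag AP S Act} {A : Set Ag} {σ : Ag → S → Act}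
    (hσ : G.IsStrat A σ) (Q : Set S) : G.IsPStrat A Q σ :=
  ⟨fun i hi s _ => hσ.1 i hi s trivial, fun i hi s _ t _ => hσ.2 i hi s trivial t trivial⟩

lemma isStrat_glue (hsymm : ∀ i, Std.Symm (G.indist i)) (F : Set S → Ag → S → Act)
    (hF : ∀ s, G.IsPStrat A (G.CKN A s) (F (G.CKN A s))) :
    G.IsStrat A (fun i s => F (G.CKN A s) i s) := by
  refine ⟨fun i hi s _ => (hF s).1 i hi s .refl, fun i hi s _ t _ hst => ?_⟩
  have hck : G.ck A s t := .single ⟨i, hi, hst⟩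
  change F (G.CKN A s) i s = F (G.CKN A t) i t
  rw [← G.CKN_eq_of_ck A hsymm hck]
  exact (hF s).2 i hi s .refl t hck hst

lemma exists_isStrat (hG : G.Valid) : ∃ σ, G.IsStrat A σ := by
  let st : Ag → Setoid S := fun i => ⟨G.indist i, hG.1 i⟩
  refine ⟨fun i s => (hG.2.1 i (Quotient.mk (st i) s).out).some, fun i _ s _ => ?_,
    fun i _ s _ t _ hst =>
      congrArg (fun c : Quotient (st i) => (hG.2.1 i c.out).some) (Quotient.sound hst)⟩
  rw [← hG.2.2.1 i _ s (Quotient.mk_out (s := st i) s)]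
  exact Set.Nonempty.some_mem _

lemma succ_congr {σ τ : Ag → S → Act} {s : S} (h : ∀ i, σ i s = τ i s) :
    G.succ A σ s = G.succ A τ s := by
  simp only [succ, h]

end CommonKnowledge

variable {G : iCGS Ag AP S Act} {G' : iCGS Ag AP S' Act'} {A : Set Ag} {R : S → S' → Prop}

lemma ck_lift_of_back
    (hback : ∀ q q', R q q' → ∀ i ∈ A, ∀ r', G'.indist i q' r' → ∃ r, G.indist i q r ∧ R r r')
    {t : S} {t' r' : S'} (hR : R t t') (h : G'.ck A t' r') :
    ∃ u, G.ck A t u ∧ R u r' := by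
  induction h with
  | refl => exact ⟨t, .refl, hR⟩
  | tail _ hstep ih =>
    obtain ⟨u, hu, hRu⟩ := ih
    obtain ⟨i, hi, hind⟩ := hstep
    obtain ⟨v, hv, hRv⟩ := hback u _ hRu i hi _ hind
    exact ⟨v, hu.tail ⟨i, hi, hv⟩, hRv⟩

lemma exists_outObj_of_step {σ : Ag → S → Act} {σ' : Ag → S' → Act'}
    (hstep : ∀ r r', R r r' → ∀ s' ∈ G'.succ A σ' r', ∃ s ∈ G.succ A σ r, R s s')
    {q : S} {q' : S'} (hq : R q q') :
    ∀ lam' ∈ G'.OutObj A σ' q', ∃ lam ∈ G.OutObj A σ q, ∀ i, R (lam i) (lam' i) := by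
  rintro lam' ⟨rfl, hsucc⟩
  have next : ∀ n, ∀ r : {r // R r (lam' n)}, ∃ s ∈ G.succ A σ r.1, R s (lam' (n + 1)) :=
    fun n r => hstep r.1 _ r.2 _ (hsucc n)
  choose f hf hRf using next
  let lam : ∀ n, {r // R r (lam' n)} := fun n => Nat.rec ⟨q, hq⟩ (fun n r => ⟨f n r, hRf n r⟩) n
  exact ⟨fun n => (lam n).1, ⟨rfl, fun n => hf n (lam n)⟩, fun n => (lam n).2⟩

namespace IsSimulation

noncomputable def classStrat (hsim : G.IsSimulation G' A R) (δ : Ag → S' → Act')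
    (σ : Ag → S → Act) (C' : Set S') : Ag → S' → Act' :=
  open Classical in
  if h : ∃ p : S × S', R p.1 p.2 ∧ C' = G'.CKN A p.2 then
    hsim.1.choose (G.CKN A h.choose.1) (G'.CKN A h.choose.2) σ
  else δ

noncomputable def transferStrat (hsim : G.IsSimulation G' A R) (δ : Ag → S' → Act')
    (σ : Ag → S → Act) : Ag → S' → Act' :=
  fun i x => hsim.classStrat δ σ (G'.CKN A x) i x

variable (hsim : G.IsSimulation G' A R) {δ : Ag → S' → Act'} {σ : Ag → S → Act}

lemma isPStrat_classStrat (hσ : G.IsStrat A σ) (hδ : G'.IsStrat A δ) (x : S') :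
    G'.IsPStrat A (G'.CKN A x) (hsim.classStrat δ σ (G'.CKN A x)) := by
  unfold classStrat
  split_ifs with h
  · obtain ⟨hR, hC⟩ := h.choose_spec
    exact hC ▸ (hsim.1.choose_spec _ _ hR).1 σ (hσ.isPStrat _)
  · exact hδ.isPStrat _

lemma isStrat_transferStrat (hsymm : ∀ i, Std.Symm (G'.indist i)) (hσ : G.IsStrat A σ)
    (hδ : G'.IsStrat A δ) : G'.IsStrat A (hsim.transferStrat δ σ) :=
  G'.isStrat_glue A hsymm _ (hsim.isPStrat_classStrat hσ hδ)

lemma exists_succ_of_transferStrat (hσ : G.IsStrat A σ) {r : S} {x : S'} (hr : R r x) :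
    ∀ s' ∈ G'.succ A (hsim.transferStrat δ σ) x, ∃ s ∈ G.succ A σ r, R s s' := by
  have h : ∃ p : S × S', R p.1 p.2 ∧ G'.CKN A x = G'.CKN A p.2 := ⟨(r, x), hr, rfl⟩
  obtain ⟨hRc, hC⟩ := h.choose_spec
  have hx : x ∈ G'.CKN A h.choose.2 := hC ▸ Relation.ReflTransGen.refl
  obtain ⟨u, hu, hRu⟩ := ck_lift_of_back hsim.2.2.1 hRc hx
  have hCu : G.CKN A u = G.CKN A r := hsim.2.2.2 u r x hRu hr
  have hr_mem : r ∈ G.CKN A h.choose.1 :=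
    hu.trans (show r ∈ G.CKN A u from hCu ▸ Relation.ReflTransGen.refl)
  have hsucc : G'.succ A (hsim.transferStrat δ σ) x =
      G'.succ A (hsim.1.choose (G.CKN A h.choose.1) (G'.CKN A h.choose.2) σ) x :=
    G'.succ_congr A fun i => by simp only [transferStrat, classStrat, dif_pos h]
  rw [hsucc]
  exact (hsim.1.choose_spec _ _ hRc).2 r hr_mem x hx hr σ (hσ.isPStrat _)

end IsSimulation

end iCGS

theorem simulation_transfers_strategies_obj_general {Ag AP S S' Act Act' : Type}
    (G : iCGS Ag AP S Act) (G' : iCGS Ag AP S' Act')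
    (hG' : G'.Valid) (A : Set Ag) (R : S → S' → Prop)
    (hsim : G.IsSimulation G' A R) (q : S) (q' : S') (hq : R q q')
    (σ : Ag → S → Act) (hσ : G.IsStrat A σ) :
    ∃ σ' : Ag → S' → Act', G'.IsStrat A σ' ∧
      ∀ lam' ∈ G'.OutObj A σ' q', ∃ lam ∈ G.OutObj A σ q,
        ∀ i, R (lam i) (lam' i) := by
  obtain ⟨δ, hδ⟩ := G'.exists_isStrat A hG'
  exact ⟨hsim.transferStrat δ σ,
    hsim.isStrat_transferStrat (fun i => (hG'.1 i).stdSymm) hσ hδ,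
    iCGS.exists_outObj_of_step (fun _ _ hr => hsim.exists_succ_of_transferStrat hσ hr) hq⟩

/-- strategy transfer along an `A`-simulation, objective outcomes:
for every uniform strategy `σ` of `A` in `G` there is a uniform strategy `σ'` in `G'`
such that every objective outcome of `σ'` at `q'` is matched, position by position
via `R`, by some objective outcome of `σ` at `q`. -/
theorem simulation_transfers_strategies_obj {Ag AP S S' Act Act' : Type}
    (G : iCGS Ag AP S Act) (G' : iCGS Ag AP S' Act')
    (hG : G.Valid) (hG' : G'.Valid) (A : Set Ag) (R : S → S' → Prop)
    (hsim : G.IsSimulation G' A R) (q : S) (q' : S') (hq : R q q')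
    (σ : Ag → S → Act) (hσ : G.IsStrat A σ) :
    ∃ σ' : Ag → S' → Act', G'.IsStrat A σ' ∧
      ∀ lam' ∈ G'.OutObj A σ' q', ∃ lam ∈ G.OutObj A σ q,
        ∀ i, R (lam i) (lam' i) :=
  simulation_transfers_strategies_obj_general G G' hG' A R hsim q q' hq σ hσ
end
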